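/- Temporal band-limit of wave data (key step in the temporal sampling theorem): Let Ω > 0 and let f : ℝ² → ℂ be a Schwartz function whose Fourier transform is supported in the closed ball {ξ ∈ ℝ² : ‖ξ‖ ≤ Ω}. Define p(x, t) = (2π)^{-2} ∫_{ℝ²} cos(t‖ξ‖) (ℱf)(ξ) e^{i⟨x, ξ⟩} dξ. Then for every fixed x ∈ ℝ², the function t ↦ p(x, t) is band-limited to [-Ω, Ω] in the distributional sense: for every Schwartz function ψ : ℝ → ℂ whose Fourier transform vanishes on [-Ω, Ω], one has ∫_ℝ p(x, t) ψ(t) dt = 0. -/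

import Mathlib

open MeasureTheory

/-
The Fourier multiplier `cos(t‖ξ‖)` only produces the temporal frequencies `±‖ξ‖`, and these lie in
`[-Ω, Ω]` on the support of `ℱf`. Concretely, integrating `p(x, ·)` against `ψ` and swapping the
order of integration (`ℱf` is continuous with compact support, hence integrable) gives
`(2π)⁻² ∫ (∫ cos(t‖ξ‖) ψ(t) dt) ℱf(ξ) e^{i⟨x,ξ⟩} dξ`, and the inner integral is the average of
`ℱψ(±‖ξ‖)`, which vanishes whenever `ℱf(ξ) ≠ 0`.
-/

noncomputable section

/-- The plane `ℝ²` as a Euclidean space. -/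
abbrev E2 := EuclideanSpace ℝ (Fin 2)

/-- Fourier transform on `ℝ²` with the convention `ℱf(ξ) = ∫ f(x) e^{-i⟨x,ξ⟩} dx`. -/
def fourier2 (f : E2 → ℂ) (ξ : E2) : ℂ :=
  ∫ x : E2, Complex.exp (-(Complex.I * ((inner ℝ x ξ : ℝ) : ℂ))) * f x

/-- Fourier transform on `ℝ` with the convention `ℱg(ω) = ∫ g(t) e^{-iωt} dt`. -/
def fourier1 (g : ℝ → ℂ) (ω : ℝ) : ℂ :=
  ∫ t : ℝ, Complex.exp (-(Complex.I * ω * t)) * g t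

/-- The Fourier-multiplier wave solution
`p(x,t) = (2π)⁻² ∫ cos(t‖ξ‖) ℱf(ξ) e^{i⟨x,ξ⟩} dξ`. -/
def waveSol (f : E2 → ℂ) (x : E2) (t : ℝ) : ℂ :=
  (1 / (2 * Real.pi) ^ 2 : ℂ) *
    ∫ ξ : E2, (Real.cos (t * ‖ξ‖) : ℂ) * fourier2 f ξ *
      Complex.exp (Complex.I * ((inner ℝ x ξ : ℝ) : ℂ))

lemma integrable_exp_neg_I_mul_mul {g : ℝ → ℂ} (hg : Integrable g) (ω : ℝ) :
    Integrable (fun t : ℝ => Complex.exp (-(Complex.I * ω * t)) * g t) :=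
  hg.bdd_mul (c := 1) (by fun_prop) (.of_forall fun t => by simp [Complex.norm_exp])

lemma integral_cos_mul_eq_fourier1 {g : ℝ → ℂ} (hg : Integrable g) (r : ℝ) :
    ∫ t : ℝ, (Real.cos (t * r) : ℂ) * g t = (fourier1 g (-r) + fourier1 g r) / 2 := by
  have hcos : ∀ t : ℝ, (Real.cos (t * r) : ℂ) * g t
      = (Complex.exp (-(Complex.I * (-r : ℝ) * t)) * g t
          + Complex.exp (-(Complex.I * r * t)) * g t) / 2 := by
    intro t
    rw [Complex.ofReal_cos, Complex.cos]
    push_cast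
    ring_nf
  simp_rw [hcos, integral_div, integral_add (integrable_exp_neg_I_mul_mul hg _)
    (integrable_exp_neg_I_mul_mul hg _)]
  rfl

lemma continuous_fourier2 {f : E2 → ℂ} (hf : Integrable f) : Continuous (fourier2 f) :=
  continuous_of_dominated (fun ξ => (by fun_prop : Continuous fun x : E2 =>
      Complex.exp (-(Complex.I * ((inner ℝ x ξ : ℝ) : ℂ)))).aestronglyMeasurable.mul
      hf.aestronglyMeasurable)
    (fun ξ => .of_forall fun x => by simp [Complex.norm_exp]) hf.norm
    (.of_forall fun x => by fun_prop)

lemma integral_waveSol_mul {f : E2 → ℂ} (hf : Integrable (fourier2 f)) (x : E2)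
    {ψ : ℝ → ℂ} (hψ : Integrable ψ) :
    ∫ t : ℝ, waveSol f x t * ψ t
      = (1 / (2 * Real.pi) ^ 2 : ℂ) * ∫ ξ : E2, (∫ t : ℝ, (Real.cos (t * ‖ξ‖) : ℂ) * ψ t) *
          fourier2 f ξ * Complex.exp (Complex.I * ((inner ℝ x ξ : ℝ) : ℂ)) := by
  have hjoint : Integrable (Function.uncurry fun (ξ : E2) (t : ℝ) =>
      (Real.cos (t * ‖ξ‖) : ℂ) * ψ t * fourier2 f ξ *
        Complex.exp (Complex.I * ((inner ℝ x ξ : ℝ) : ℂ))) (volume.prod volume) := by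
    refine ((hf.mul_prod hψ).bdd_mul (c := 1) (f := fun z : E2 × ℝ =>
        (Real.cos (z.2 * ‖z.1‖) : ℂ) * Complex.exp (Complex.I * ((inner ℝ x z.1 : ℝ) : ℂ)))
        (by fun_prop) (.of_forall fun z => ?_)).congr (.of_forall fun z => ?_)
    · rw [norm_mul, Complex.norm_exp_I_mul_ofReal, mul_one, Complex.norm_real]
      exact Real.abs_cos_le_one _
    · rcases z with ⟨ξ, t⟩
      simp only [Function.uncurry_apply_pair]
      ring
  simp_rw [waveSol, mul_assoc (1 / (2 * Real.pi) ^ 2 : ℂ), integral_const_mul, ← integral_mul_const]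
  rw [integral_integral_swap hjoint]
  congr 1
  refine integral_congr_ae (.of_forall fun t => integral_congr_ae (.of_forall fun ξ => ?_))
  ring

theorem waveSol_temporal_bandlimit_general
    (Ω : ℝ) (f : SchwartzMap E2 ℂ)
    (hsupp : ∀ ξ : E2, ξ ∉ Metric.closedBall (0 : E2) Ω → fourier2 f ξ = 0) :
    ∀ x : E2, ∀ ψ : SchwartzMap ℝ ℂ,
      (∀ ω ∈ Set.Icc (-Ω) Ω, fourier1 ψ ω = 0) →
      ∫ t : ℝ, waveSol f x t * ψ t = 0 := by
  intro x ψ hψ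
  have hF : Integrable (fourier2 f) :=
    (continuous_fourier2 f.integrable).integrable_of_hasCompactSupport
      (HasCompactSupport.intro (isCompact_closedBall 0 Ω) hsupp)
  suffices ∀ ξ : E2, (∫ t : ℝ, (Real.cos (t * ‖ξ‖) : ℂ) * ψ t) * fourier2 f ξ = 0 by
    simp only [integral_waveSol_mul hF x ψ.integrable, this, zero_mul, integral_zero, mul_zero]
  intro ξ
  rw [integral_cos_mul_eq_fourier1 ψ.integrable]
  by_cases hξ : ‖ξ‖ ≤ Ω
  · rw [hψ _ ⟨neg_le_neg hξ, by linarith [norm_nonneg ξ]⟩,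
      hψ _ ⟨by linarith [norm_nonneg ξ], hξ⟩]
    ring
  · rw [hsupp ξ (by simpa using hξ), mul_zero]

/-- **Temporal band-limit of wave data.**  If the Schwartz initial pressure `f`
has Fourier transform supported in the closed ball of radius `Ω`, then for
every fixed `x` the wave data `t ↦ p(x,t)` is band-limited to `[-Ω, Ω]` in the
distributional sense: it annihilates every Schwartz test function whose
Fourier transform vanishes on `[-Ω, Ω]`. -/
theorem waveSol_temporal_bandlimit
    (Ω : ℝ) (hΩ : 0 < Ω) (f : SchwartzMap E2 ℂ)
    (hsupp : ∀ ξ : E2, ξ ∉ Metric.closedBall (0 : E2) Ω → fourier2 f ξ = 0) :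
    ∀ x : E2, ∀ ψ : SchwartzMap ℝ ℂ,
      (∀ ω ∈ Set.Icc (-Ω) Ω, fourier1 ψ ω = 0) →
      ∫ t : ℝ, waveSol f x t * ψ t = 0 :=
  waveSol_temporal_bandlimit_general Ω f hsupp
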